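/- Let e be a singular idempotent transformation of {1,...,n} and g ∈ S_n. Then ⟨C_e⟩ = ⟨C_{eg}⟩ = (eg)^{S_n}; i.e., the semigroup generated by the S_n-conjugates of the singular transformation a = eg equals the non-invertible part of ⟨{a} ∪ S_n⟩ and is idempotent generated. -/

import Mathlib

/-- The full transformation monoid on `{1,...,n}`, modeled as `Function.End (Fin n)`
(multiplication is composition). -/
abbrev Tn (n : ℕ) := Function.End (Fin n)

/-- A permutation viewed as a transformation. -/
def ofPerm {n : ℕ} (g : Equiv.Perm (Fin n)) : Tn n := ⇑g

/-- The rank of a transformation: the size of its image. -/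
def rnk {n : ℕ} (a : Tn n) : ℕ := (Finset.univ.image a).card

/-- The symmetric group embedded in `Tn n` as a set. -/
def perms (n : ℕ) : Set (Tn n) := Set.range (fun g : Equiv.Perm (Fin n) => ofPerm g)

/-- The `S_n`-conjugacy class of a transformation. -/
def conjClass {n : ℕ} (t : Tn n) : Set (Tn n) :=
  {s | ∃ g : Equiv.Perm (Fin n), s = ofPerm g⁻¹ * t * ofPerm g}

/-!
Write `S = ⟨C_e⟩` and say that a permutation `π` is realized on `U ⊆ {1,…,n}` if some element
of `S` agrees with `π` on `U`. Realizations compose along images and are transported by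
conjugation, since `S` is closed under conjugation. Conjugating `e` by the transposition of a
point `u` outside its image with `e u` gives an element of `S` that swaps `e u` and `u` on the
image of `e`; moving this around by conjugation realizes every transposition with one point in
a set `h(im e)` and one outside, and a transposition with both points inside is the product of
three such (through a point outside). So every `π` is realized on every `h(im e)`, and
`p e q = s · q⁻¹ e q` with `s` realizing `p q` on `q⁻¹(im e)` lies in `S`. Hence `S` absorbs
permutations on both sides, which gives `⟨C_{ge}⟩ ⊆ S` and `⟨{ge} ∪ S_n⟩ ⊆ S ∪ S_n`;
conversely `e ∈ ⟨C_{ge}⟩` because `e g^(k+1) = e g^k · g^-(k+1) (g e) g^(k+1)`.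
-/

open Equiv Set Function

lemma mapsTo_inv_image {α : Type*} (h : Perm α) (V : Set α) : MapsTo ⇑h⁻¹ (h '' V) V := by
  rintro _ ⟨x, hx, rfl⟩
  simpa using hx

lemma swap_eq_swap_mul_swap_mul_swap {α : Type*} [DecidableEq α] {a b c : α} (hab : a ≠ b)
    (hca : c ≠ a) (hcb : c ≠ b) :
    swap a b = swap c b * swap b a * swap a c := by
  ext z
  simp only [Perm.mul_apply, swap_apply_def]
  split_ifs <;> grind

lemma image_perm_image {α : Type*} (σ τ : Perm α) (V : Set α) :
    σ '' (τ '' V) = ⇑(σ * τ) '' V := by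
  rw [Perm.coe_mul, image_comp]

variable {n : ℕ}

@[simp] lemma Tn.mul_apply (f g : Tn n) (x : Fin n) : (f * g) x = f (g x) := rfl

@[simp] lemma ofPerm_apply (g : Perm (Fin n)) (x : Fin n) : ofPerm g x = g x := rfl

lemma ofPerm_mul (g h : Perm (Fin n)) : ofPerm (g * h) = ofPerm g * ofPerm h := rfl

lemma ofPerm_one : ofPerm (1 : Perm (Fin n)) = 1 := rfl

lemma conj_mem_closure_conjClass {t x : Tn n} (hx : x ∈ Subsemigroup.closure (conjClass t))
    (h : Perm (Fin n)) : ofPerm h⁻¹ * x * ofPerm h ∈ Subsemigroup.closure (conjClass t) := by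
  induction hx using Subsemigroup.closure_induction with
  | mem y hy =>
    obtain ⟨g, rfl⟩ := hy
    refine Subsemigroup.subset_closure ⟨g * h, ?_⟩
    simp only [mul_inv_rev, ofPerm_mul, mul_assoc]
  | mul a b _ _ ha hb =>
    convert mul_mem ha hb using 1
    funext z
    simp

def singular (n : ℕ) : Subsemigroup (Tn n) where
  carrier := {x | ¬ Bijective x}
  mul_mem' hx _ hxy := hx (Finite.surjective_iff_bijective.mp hxy.surjective.of_comp)

lemma closure_conjClass_le_singular {t : Tn n} (ht : ¬ Bijective t) :
    Subsemigroup.closure (conjClass t) ≤ singular n := by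
  refine Subsemigroup.closure_le.mpr ?_
  rintro _ ⟨g, rfl⟩ hb
  have ht_eq : t = ofPerm g * (ofPerm g⁻¹ * t * ofPerm g) * ofPerm g⁻¹ := by funext z; simp
  exact ht (ht_eq ▸ (g.bijective.comp hb).comp g⁻¹.bijective)

lemma ofPerm_notMem_singular (g : Perm (Fin n)) : ofPerm g ∉ singular n := fun h => h g.bijective

lemma closure_conjClass_le_closure_insert_perms (t : Tn n) :
    Subsemigroup.closure (conjClass t) ≤ Subsemigroup.closure ({t} ∪ perms n) := by
  refine Subsemigroup.closure_le.mpr ?_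
  rintro _ ⟨g, rfl⟩
  have mem_of_perm (h : Perm (Fin n)) : ofPerm h ∈ Subsemigroup.closure ({t} ∪ perms n) :=
    Subsemigroup.subset_closure (.inr ⟨h, rfl⟩)
  exact mul_mem (mul_mem (mem_of_perm g⁻¹) (Subsemigroup.subset_closure (.inl rfl))) (mem_of_perm g)

lemma mem_or_mem_perms_of_mem_closure_insert_perms {S : Subsemigroup (Tn n)}
    (hS : ∀ x ∈ S, ∀ p q : Perm (Fin n), ofPerm p * x * ofPerm q ∈ S) {t x : Tn n} (ht : t ∈ S)
    (hx : x ∈ Subsemigroup.closure ({t} ∪ perms n)) : x ∈ S ∨ x ∈ perms n := by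
  induction hx using Subsemigroup.closure_induction with
  | mem y hy =>
    rcases hy with rfl | hy
    · exact .inl ht
    · exact .inr hy
  | mul x y _ _ hx hy =>
    rcases hx with hx | ⟨p, rfl⟩ <;> rcases hy with hy | ⟨q, rfl⟩
    · exact .inl (mul_mem hx hy)
    · exact .inl (by simpa only [ofPerm_one, one_mul] using hS x hx 1 q)
    · exact .inl (by simpa only [ofPerm_one, mul_one, mul_assoc] using hS y hy p 1)
    · exact .inr ⟨p * q, rfl⟩

def RealizedOn (S : Subsemigroup (Tn n)) (π : Perm (Fin n)) (U : Set (Fin n)) : Prop :=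
  ∃ s ∈ S, EqOn s π U

namespace RealizedOn

variable {S : Subsemigroup (Tn n)} {π σ τ : Perm (Fin n)} {U : Set (Fin n)}

lemma congr (h : RealizedOn S π U) (hπ : EqOn π σ U) : RealizedOn S σ U :=
  let ⟨s, hs, hsπ⟩ := h
  ⟨s, hs, hsπ.trans hπ⟩

lemma mul (hσ : RealizedOn S σ (τ '' U)) (hτ : RealizedOn S τ U) : RealizedOn S (σ * τ) U := by
  obtain ⟨s, hs, hsσ⟩ := hσ
  obtain ⟨t, ht, htτ⟩ := hτ
  refine ⟨s * t, mul_mem hs ht, fun z hz => ?_⟩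
  simp only [Tn.mul_apply, htτ hz, Perm.mul_apply]
  exact hsσ (mem_image_of_mem τ hz)

lemma conj {t : Tn n} {V : Set (Fin n)} (h : RealizedOn (Subsemigroup.closure (conjClass t)) π U)
    (k : Perm (Fin n)) (hk : MapsTo ⇑k⁻¹ V U) :
    RealizedOn (Subsemigroup.closure (conjClass t)) (k * π * k⁻¹) V := by
  obtain ⟨s, hs, hsπ⟩ := h
  refine ⟨ofPerm k⁻¹⁻¹ * s * ofPerm k⁻¹, conj_mem_closure_conjClass hs k⁻¹, fun z hz => ?_⟩
  simpa using hsπ (hk hz)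

end RealizedOn

section Idempotent

variable {e : Tn n} (he : IsIdempotentElem e)

local notation "S" => Subsemigroup.closure (conjClass e)

include he

lemma apply_apply_eq_apply (x : Fin n) : e (e x) = e x := congrFun he x

lemma apply_of_mem_range {x : Fin n} (hx : x ∈ range e) : e x = x := by
  obtain ⟨y, rfl⟩ := hx
  exact apply_apply_eq_apply he y

lemma realizedOn_one_range : RealizedOn S 1 (range e) :=
  ⟨e, Subsemigroup.subset_closure ⟨1, rfl⟩, fun _ hx => apply_of_mem_range he hx⟩

lemma realizedOn_swap_apply_range {u : Fin n} (hu : u ∉ range e) :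
    RealizedOn S (swap (e u) u) (range e) := by
  refine ⟨ofPerm (swap u (e u))⁻¹ * e * ofPerm (swap u (e u)),
    Subsemigroup.subset_closure ⟨_, rfl⟩, fun x hx => ?_⟩
  have hxu : x ≠ u := fun h => hu (h ▸ hx)
  by_cases hxe : x = e u
  · subst hxe
    simp
  · simp [swap_apply_of_ne_of_ne, hxu, hxe, apply_of_mem_range he hx]

lemma realizedOn_swap_of_mem_range {a u : Fin n} (ha : a ∈ range e) (hu : u ∉ range e) :
    RealizedOn S (swap a u) (range e) := by
  have hk : MapsTo ⇑(swap (e u) a)⁻¹ (range e) (range e) := by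
    intro x hx
    rw [swap_inv, swap_apply_def]
    split_ifs
    · exact ha
    · exact mem_range_self u
    · exact hx
  have hua : u ≠ a := fun h => hu (h ▸ ha)
  have hue : u ≠ e u := fun h => hu (h ▸ mem_range_self u)
  have := (realizedOn_swap_apply_range he hu).conj (swap (e u) a) hk
  rwa [← swap_apply_apply, swap_apply_left, swap_apply_of_ne_of_ne hue hua] at this

lemma realizedOn_one_image (h : Perm (Fin n)) : RealizedOn S 1 (h '' range e) := by
  simpa using (realizedOn_one_range he).conj h (mapsTo_inv_image h _)

lemma realizedOn_swap_of_mem_image {a b : Fin n} (h : Perm (Fin n)) (ha : a ∈ h '' range e)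
    (hb : b ∉ h '' range e) : RealizedOn S (swap a b) (h '' range e) := by
  rw [mem_image_equiv] at ha hb
  have := (realizedOn_swap_of_mem_range he ha hb).conj h (mapsTo_inv_image h _)
  simpa [← swap_apply_apply] using this

lemma realizedOn_swap_of_mem_of_mem (hs : ¬ Surjective e) {a b : Fin n} (hab : a ≠ b)
    (h : Perm (Fin n)) (ha : a ∈ h '' range e) (hb : b ∈ h '' range e) :
    RealizedOn S (swap a b) (h '' range e) := by
  obtain ⟨u, hu⟩ : ∃ u, u ∉ range e := not_forall.mp hs
  have hc : h u ∉ h '' range e := by rwa [h.injective.mem_set_image]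
  have hca : h u ≠ a := fun h' => hc (h' ▸ ha)
  have hcb : h u ≠ b := fun h' => hc (h' ▸ hb)
  rw [swap_eq_swap_mul_swap_mul_swap hab hca hcb]
  refine .mul (.mul ?_ ?_) (realizedOn_swap_of_mem_image he h ha hc)
  all_goals
    simp only [image_perm_image]
    refine realizedOn_swap_of_mem_image he _ ?_ ?_
  all_goals
    simp only [← image_perm_image, mem_image_equiv, symm_swap, swap_apply_left, swap_apply_right,
      Equiv.symm_apply_apply, swap_apply_of_ne_of_ne hab.symm hcb.symm,
      swap_apply_of_ne_of_ne hcb hca]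
  exacts [mem_image_equiv.mp ha, hu, mem_image_equiv.mp hb, hu]

lemma realizedOn_swap (hs : ¬ Surjective e) (a b : Fin n) (h : Perm (Fin n)) :
    RealizedOn S (swap a b) (h '' range e) := by
  by_cases hab : a = b
  · subst hab
    rw [swap_self]
    exact realizedOn_one_image he h
  by_cases ha : a ∈ h '' range e <;> by_cases hb : b ∈ h '' range e
  · exact realizedOn_swap_of_mem_of_mem he hs hab h ha hb
  · exact realizedOn_swap_of_mem_image he h ha hb
  · exact swap_comm a b ▸ realizedOn_swap_of_mem_image he h hb ha
  · refine (realizedOn_one_image he h).congr fun x hx => ?_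
    rw [swap_apply_of_ne_of_ne (ne_of_mem_of_not_mem hx ha) (ne_of_mem_of_not_mem hx hb),
      Perm.one_apply]

lemma realizedOn_image_range (hs : ¬ Surjective e) (π h : Perm (Fin n)) :
    RealizedOn S π (h '' range e) := by
  induction π using Perm.swap_induction_on generalizing h with
  | one => exact realizedOn_one_image he h
  | swap_mul f a b _ ih =>
    refine .mul ?_ (ih h)
    rw [image_perm_image]
    exact realizedOn_swap he hs a b (f * h)

lemma ofPerm_mul_mul_ofPerm_mem (hs : ¬ Surjective e) (p q : Perm (Fin n)) :
    ofPerm p * e * ofPerm q ∈ S := by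
  obtain ⟨s, hsS, hsπ⟩ := realizedOn_image_range he hs (p * q) q⁻¹
  convert mul_mem hsS (Subsemigroup.subset_closure ⟨q, rfl⟩) using 1
  funext z
  simpa using (hsπ (mem_image_of_mem _ (mem_range_self (q z)))).symm

lemma ofPerm_mul_mul_ofPerm_mem_of_mem (hs : ¬ Surjective e) {x : Tn n} (hx : x ∈ S) :
    ∀ p q : Perm (Fin n), ofPerm p * x * ofPerm q ∈ S := by
  induction hx using Subsemigroup.closure_induction with
  | mem y hy =>
    obtain ⟨g, rfl⟩ := hy
    intro p q
    simpa only [ofPerm_mul, mul_assoc] using ofPerm_mul_mul_ofPerm_mem he hs (p * g⁻¹) (g * q)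
  | mul x y _ _ hx hy =>
    intro p q
    simpa only [ofPerm_one, mul_one, one_mul, mul_assoc] using mul_mem (hx p 1) (hy 1 q)

lemma isIdempotentElem_of_mem_conjClass {x : Tn n} (hx : x ∈ conjClass e) : IsIdempotentElem x := by
  obtain ⟨g, rfl⟩ := hx
  funext z
  simp [apply_apply_eq_apply he]

lemma mul_ofPerm_pow_mem_closure (g : Perm (Fin n)) :
    ∀ k : ℕ, e * ofPerm (g ^ (k + 1)) ∈ Subsemigroup.closure (conjClass (ofPerm g * e))
  | 0 => Subsemigroup.subset_closure ⟨g, by funext z; simp⟩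
  | k + 1 => by
    convert mul_mem (mul_ofPerm_pow_mem_closure g k)
      (Subsemigroup.subset_closure ⟨g ^ (k + 2), rfl⟩) using 1
    funext z
    simp [pow_succ' g (k + 1), apply_apply_eq_apply he]

lemma mem_closure_conjClass_ofPerm_mul (g : Perm (Fin n)) :
    e ∈ Subsemigroup.closure (conjClass (ofPerm g * e)) := by
  simpa [Nat.sub_add_cancel (orderOf_pos g), pow_orderOf_eq_one, ofPerm_one]
    using mul_ofPerm_pow_mem_closure he g (orderOf g - 1)

lemma closure_conjClass_ofPerm_mul (hs : ¬ Surjective e) (g : Perm (Fin n)) :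
    Subsemigroup.closure (conjClass (ofPerm g * e)) = S := by
  refine le_antisymm (Subsemigroup.closure_le.mpr ?_) (Subsemigroup.closure_le.mpr ?_)
  · rintro _ ⟨h, rfl⟩
    simpa only [ofPerm_mul, mul_assoc, SetLike.mem_coe]
      using ofPerm_mul_mul_ofPerm_mem he hs (h⁻¹ * g) h
  · rintro _ ⟨h, rfl⟩
    exact conj_mem_closure_conjClass (mem_closure_conjClass_ofPerm_mul he g) h

lemma coe_closure_conjClass_eq_closure_insert_perms_diff (hs : ¬ Surjective e) (g : Perm (Fin n)) :
    (S : Set (Tn n)) = ↑(Subsemigroup.closure ({ofPerm g * e} ∪ perms n)) \ perms n := by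
  have hge : ofPerm g * e ∈ S := by
    simpa only [ofPerm_one, mul_one] using ofPerm_mul_mul_ofPerm_mem he hs g 1
  ext x
  constructor
  · intro hx
    refine ⟨?_, ?_⟩
    · rw [← closure_conjClass_ofPerm_mul he hs g] at hx
      exact closure_conjClass_le_closure_insert_perms _ hx
    · rintro ⟨p, rfl⟩
      exact ofPerm_notMem_singular p (closure_conjClass_le_singular (fun h => hs h.surjective) hx)
  · rintro ⟨hx, hxp⟩
    exact (mem_or_mem_perms_of_mem_closure_insert_perms
      (fun _ => ofPerm_mul_mul_ofPerm_mem_of_mem he hs) hge hx).resolve_right hxp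

end Idempotent

/-- Levi–McFadden: for singular `a = eg`, `⟨C_a⟩ = ⟨C_e⟩ = a^{S_n}` and it is
idempotent generated. -/
theorem stmt11 (n : ℕ) (e : Tn n) (he : e * e = e) (hs : ¬ Function.Bijective e)
    (g : Equiv.Perm (Fin n)) :
    Subsemigroup.closure (conjClass (ofPerm g * e)) = Subsemigroup.closure (conjClass e) ∧
    (↑(Subsemigroup.closure (conjClass (ofPerm g * e))) : Set (Tn n)) =
      ↑(Subsemigroup.closure ({ofPerm g * e} ∪ perms n)) \ perms n ∧
    ∃ E : Set (Tn n), (∀ x ∈ E, x * x = x) ∧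
      Subsemigroup.closure (conjClass (ofPerm g * e)) = Subsemigroup.closure E := by
  have hsurj : ¬ Surjective e := fun h => hs (Finite.surjective_iff_bijective.mp h)
  have hclosure := closure_conjClass_ofPerm_mul he hsurj g
  refine ⟨hclosure, ?_, conjClass e, fun x hx => isIdempotentElem_of_mem_conjClass he hx, hclosure⟩
  rw [hclosure]
  exact coe_closure_conjClass_eq_closure_insert_perms_diff he hsurj g
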